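/- arXiv:1912.05852 — 3 statements merged into one kernel-verified Lean document; each statement's English description precedes it below -/
import Mathlib

section
/- Let a_n(x) = ((x−1)(x²−1)⋯(xⁿ−1))^{r−1} in ℤ[x] with r ≥ 2, and define b_n(x) by (1 + Σ a_n tⁿ)(1 + Σ b_n tⁿ) = 1 in ℤ[x][[t]]. Then for every n ≥ 1, the polynomial (x−1)^{n(r−1)} divides b_n(x). -/
open Polynomial

/-!
Since `xʲ - 1` is divisible by `x - 1`, the coefficient `aₙ` lies in `Iⁿ` for the ideal
`I = ((x - 1)^{r-1})`. Comparing coefficients of `tⁿ` in `A * B = 1` with `a₀ = 1` gives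
`bₙ = -∑_{i ≥ 1} aᵢ bₙ₋ᵢ`, and each term lies in `Iⁱ Iⁿ⁻ⁱ = Iⁿ` by strong induction.
-/

namespace PowerSeries

variable {R : Type*} [CommRing R]

theorem coeff_mem_pow_of_mul_eq_one (I : Ideal R) {A B : R⟦X⟧}
    (hA : ∀ n, coeff n A ∈ I ^ n) (hA0 : IsUnit (coeff 0 A)) (hAB : A * B = 1) :
    ∀ n, coeff n B ∈ I ^ n := by
  intro n
  induction n using Nat.strong_induction_on with
  | _ n ih =>
    rcases Nat.eq_zero_or_pos n with rfl | hn
    · simp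
    have hcoeff := congrArg (coeff n) hAB
    rw [coeff_mul, coeff_one, if_neg hn.ne', Finset.Nat.sum_antidiagonal_eq_sum_range_succ_mk,
      Finset.sum_range_succ', Nat.sub_zero] at hcoeff
    have hrest : ∑ i ∈ Finset.range n, coeff (i + 1) A * coeff (n - (i + 1)) B ∈ I ^ n := by
      refine Ideal.sum_mem _ fun i hi => ?_
      have hin : i + 1 ≤ n := Finset.mem_range.mp hi
      rw [← Nat.add_sub_cancel' hin, pow_add, Nat.add_sub_cancel_left]
      exact Ideal.mul_mem_mul (hA _) (ih _ (by omega))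
    rw [← Ideal.unit_mul_mem_iff_mem _ hA0, eq_neg_of_add_eq_zero_right hcoeff]
    exact neg_mem hrest

end PowerSeries

theorem sub_one_pow_mul_dvd_prod_pow_sub_one {R : Type*} [CommRing R] (x : R) (m n : ℕ) :
    (x - 1) ^ (n * m) ∣ ∏ j ∈ Finset.Icc 1 n, (x ^ j - 1) ^ m := by
  have hconst : (x - 1) ^ (n * m) = ∏ _j ∈ Finset.Icc 1 n, (x - 1) ^ m := by
    rw [Finset.prod_const, Nat.card_Icc, Nat.add_sub_cancel, ← pow_mul, Nat.mul_comm]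
  rw [hconst]
  refine Finset.prod_dvd_prod_of_dvd _ _ fun j _ => pow_dvd_pow_of_dvd ?_ m
  simpa using sub_dvd_pow_sub_pow x 1 j

theorem stmt_7_general (r : ℕ) (a b : ℕ → Polynomial ℤ)
    (ha : ∀ n, a n = ∏ j ∈ Finset.Icc 1 n, ((X : Polynomial ℤ) ^ j - 1) ^ (r - 1))
    (h : (PowerSeries.mk a) * (PowerSeries.mk b) = 1) :
    ∀ n, 1 ≤ n → ((X : Polynomial ℤ) - 1) ^ (n * (r - 1)) ∣ b n := by
  intro n _
  set I : Ideal (Polynomial ℤ) := Ideal.span {((X : Polynomial ℤ) - 1) ^ (r - 1)}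
  have hmem : ∀ {p : Polynomial ℤ} {m : ℕ}, p ∈ I ^ m ↔ (X - 1) ^ (m * (r - 1)) ∣ p := by
    intro p m
    rw [Ideal.span_singleton_pow, Ideal.mem_span_singleton, ← pow_mul, Nat.mul_comm]
  have hA : ∀ m, PowerSeries.coeff m (PowerSeries.mk a) ∈ I ^ m := fun m => by
    rw [PowerSeries.coeff_mk, hmem, ha]
    exact sub_one_pow_mul_dvd_prod_pow_sub_one _ _ _
  have hA0 : IsUnit (PowerSeries.coeff 0 (PowerSeries.mk a)) := by simp [ha]
  simpa [hmem] using PowerSeries.coeff_mem_pow_of_mul_eq_one I hA hA0 h n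

/-- With `aₙ(x) = ((x−1)(x²−1)⋯(xⁿ−1))^{r−1}` (r ≥ 2) and `bₙ` the coefficients of the
formal inverse power series, `(x−1)^{n(r−1)}` divides `bₙ(x)` for all `n ≥ 1`. -/
theorem stmt_7 (r : ℕ) (hr : 2 ≤ r) (a b : ℕ → Polynomial ℤ)
    (ha : ∀ n, a n = ∏ j ∈ Finset.Icc 1 n, ((X : Polynomial ℤ) ^ j - 1) ^ (r - 1))
    (hb0 : b 0 = 1)
    (h : (PowerSeries.mk a) * (PowerSeries.mk b) = 1) :
    ∀ n, 1 ≤ n → ((X : Polynomial ℤ) - 1) ^ (n * (r - 1)) ∣ b n :=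
  stmt_7_general r a b ha h
end

section
/- Let a_n(x) = ((x−1)(x²−1)⋯(xⁿ−1))^{r−1} with r ≥ 2, and b_n(x) the coefficients of the inverse series as above. Then deg b_n(x) = deg a_n(x) = (n(n+1)/2)(r−1), and b_n(x) = −a_n(x) + (terms of lower degree). -/
open Polynomial Finset

/-- With `aₙ(x) = ∏_{j=1}^n (xʲ−1)^{r−1}` (r ≥ 2) and `bₙ` the inverse-series coefficients,
`deg bₙ = deg aₙ = (n(n+1)/2)(r−1)`, and `bₙ = −aₙ + (terms of lower degree)`. -/
theorem stmt_8 (r : ℕ) (hr : 2 ≤ r) (a b : ℕ → Polynomial ℤ)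
    (ha : ∀ n, a n = ∏ j ∈ Finset.Icc 1 n, ((X : Polynomial ℤ) ^ j - 1) ^ (r - 1))
    (hb0 : b 0 = 1)
    (h : (PowerSeries.mk a) * (PowerSeries.mk b) = 1) :
    ∀ n, 1 ≤ n →
      (a n).natDegree = (n * (n + 1) / 2) * (r - 1) ∧
      (b n).natDegree = (n * (n + 1) / 2) * (r - 1) ∧
      (b n + a n).degree < (a n).degree := by
  -- Gauss sum, doubled form
  have hg2 : ∀ n : ℕ, (∑ j ∈ Icc 1 n, j) * 2 = n * (n + 1) := by
    intro n
    induction n with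
    | zero => simp
    | succ m ih =>
      rw [Finset.sum_Icc_succ_top (by omega : 1 ≤ m + 1), add_mul]
      nlinarith [ih]
  -- a n is monic
  have hmon : ∀ n, (a n).Monic := by
    intro n
    rw [ha n]
    refine monic_prod_of_monic _ _ fun j hj => ?_
    have hj1 : j ≠ 0 := by simp only [Finset.mem_Icc] at hj; omega
    simpa using (monic_X_pow_sub_C (1 : ℤ) hj1).pow (r - 1)
  -- natDegree of a n
  have hadeg : ∀ n, (a n).natDegree = (∑ j ∈ Icc 1 n, j) * (r - 1) := by
    intro n
    have hCe : ∀ j : ℕ, ((X : Polynomial ℤ) ^ j - 1) = X ^ j - C 1 := by simp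
    rw [ha n, natDegree_prod _ _ (fun j hj => pow_ne_zero _ ?_), Finset.sum_mul]
    · refine Finset.sum_congr rfl fun j hj => ?_
      rw [natDegree_pow, hCe, natDegree_X_pow_sub_C, mul_comm]
    · intro hc
      have hj1 : j ≠ 0 := by simp only [Finset.mem_Icc] at hj; omega
      have := (monic_X_pow_sub_C (1 : ℤ) hj1).ne_zero
      rw [← hCe] at this
      exact this hc
  have ha0 : a 0 = 1 := by rw [ha 0]; simp
  have hane : ∀ n, a n ≠ 0 := fun n => (hmon n).ne_zero
  have hadege : ∀ n, (a n).degree = ((∑ j ∈ Icc 1 n, j) * (r - 1) : ℕ) := by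
    intro n
    rw [degree_eq_natDegree (hane n), hadeg n]
  -- coefficient identity
  have hcoeff : ∀ n : ℕ, 1 ≤ n → ∑ k ∈ range (n + 1), a k * b (n - k) = 0 := by
    intro n hn
    have : PowerSeries.coeff (R := Polynomial ℤ) n (PowerSeries.mk a * PowerSeries.mk b)
        = PowerSeries.coeff (R := Polynomial ℤ) n 1 := by rw [h]
    rw [PowerSeries.coeff_mul, Finset.Nat.sum_antidiagonal_eq_sum_range_succ_mk] at this
    rw [PowerSeries.coeff_one, if_neg (show ¬ n = 0 by omega)] at this
    simpa using this
  -- key strict sum inequality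
  have hsum_lt : ∀ i j : ℕ, 1 ≤ i → 1 ≤ j →
      (∑ t ∈ Icc 1 i, t) * (r - 1) + (∑ t ∈ Icc 1 j, t) * (r - 1)
        < (∑ t ∈ Icc 1 (i + j), t) * (r - 1) := by
    intro i j hi hj
    have h2 : (∑ t ∈ Icc 1 i, t) + (∑ t ∈ Icc 1 j, t) < ∑ t ∈ Icc 1 (i + j), t := by
      have h1 := hg2 i; have h2 := hg2 j; have h3 := hg2 (i + j)
      nlinarith
    calc (∑ t ∈ Icc 1 i, t) * (r - 1) + (∑ t ∈ Icc 1 j, t) * (r - 1)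
        = ((∑ t ∈ Icc 1 i, t) + (∑ t ∈ Icc 1 j, t)) * (r - 1) := by ring
      _ < (∑ t ∈ Icc 1 (i + j), t) * (r - 1) :=
          Nat.mul_lt_mul_of_lt_of_le h2 le_rfl (by omega)
  -- main induction
  have hmain : ∀ n, 1 ≤ n → (b n + a n).degree < (a n).degree := by
    intro n
    induction n using Nat.strong_induction_on with
    | _ n IH =>
      intro hn
      obtain ⟨m, rfl⟩ : ∃ m, n = m + 1 := ⟨n - 1, by omega⟩
      have hc := hcoeff (m + 1) (by omega)
      rw [Finset.sum_range_succ, Finset.sum_range_succ'] at hc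
      simp only [ha0, hb0, one_mul, mul_one, Nat.sub_zero, Nat.succ_sub_succ,
        Nat.sub_self] at hc
      have heq : b (m + 1) + a (m + 1) = -∑ k ∈ range m, a (k + 1) * b (m - k) := by
        linear_combination hc
      rw [heq, degree_neg]
      refine lt_of_le_of_lt (degree_sum_le _ _) ?_
      rw [Finset.sup_lt_iff (by rw [hadege]; exact WithBot.bot_lt_coe _)]
      intro k hk
      have hkm : k < m := Finset.mem_range.mp hk
      -- degree of b (m - k) equals degree of a (m - k)
      have hbm : (b (m - k)).degree = (a (m - k)).degree := by
        have hlt := IH (m - k) (by omega) (by omega)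
        have : b (m - k) = (b (m - k) + a (m - k)) - a (m - k) := by ring
        rw [this, degree_sub_eq_right_of_degree_lt hlt]
      refine lt_of_le_of_lt (degree_mul_le _ _) ?_
      rw [hbm, hadege, hadege, hadege, ← Nat.cast_add, Nat.cast_lt]
      have := hsum_lt (k + 1) (m - k) (by omega) (by omega)
      rwa [(by omega : k + 1 + (m - k) = m + 1)] at this
  intro n hn
  have hgauss : (∑ j ∈ Icc 1 n, j) = n * (n + 1) / 2 := by have := hg2 n; omega
  have hbd : (b n).degree = (a n).degree := by
    have hlt := hmain n hn
    have : b n = (b n + a n) - a n := by ring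
    rw [this, degree_sub_eq_right_of_degree_lt hlt]
  refine ⟨by rw [hadeg, hgauss], ?_, hmain n hn⟩
  have : (b n).degree = ((n * (n + 1) / 2) * (r - 1) : ℕ) := by
    rw [hbd, hadege, hgauss]
  exact natDegree_eq_of_degree_eq_some this
end

section
/- Given polynomials f_n(x) ∈ ℚ[x] for n ≥ 1, the coefficient of tⁿ in PLog(1 + Σ_{n≥1} f_n(x) tⁿ) := Ψ⁻¹(log(1 + Σ f_n tⁿ)) equals Σ_{d | n} Σ_{[k] ∈ 𝒫_d} (μ(n/d)/(n/d)) · ((−1)^{|[k]|−1}/|[k]|) · multinomial(|[k]|; k_1,…,k_d) · ∏_{j=1}^{d} f_j(x^{n/d})^{k_j}. -/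
/-- The operator `Ψ⁻¹` on `t·ℚ[x][[t]]`, determined `ℚ`-linearly by
`Ψ⁻¹(xʲ tᵏ) = Σ_{l≥1} (μ(l)/l) x^{jl} t^{kl}`. -/
noncomputable def adamsInv (f : PowerSeries (Polynomial ℚ)) : PowerSeries (Polynomial ℚ) :=
  PowerSeries.mk fun m => ∑ l ∈ m.divisors,
    Polynomial.C ((ArithmeticFunction.moebius l : ℚ) / l) *
      ((PowerSeries.coeff (R := Polynomial ℚ) (m / l) f).comp (Polynomial.X ^ l))

/-- The formal logarithm on `1 + t·ℚ[x][[t]]`: `log F = Σ_{i≥1} (−1)^{i−1} (F−1)^i / i`. -/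
noncomputable def plog (F : PowerSeries (Polynomial ℚ)) : PowerSeries (Polynomial ℚ) :=
  PowerSeries.mk fun m => ∑ i ∈ Finset.Icc 1 m,
    Polynomial.C ((-1 : ℚ) ^ (i - 1) / i) * (PowerSeries.coeff (R := Polynomial ℚ) m ((F - 1) ^ i))

/-! Only the `t`-degrees up to `d` matter for the coefficient of `tᵈ` in `log (1 + G)`, so `G` may
be replaced by the polynomial `Σ_{j ≤ d} f_j tʲ`. The multinomial theorem expands its `i`-th power
over multiplicity vectors `k` with `Σ k_j = i`, and those of weight `Σ j k_j = d` are exactly the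
partitions of `d` into `i` parts. Applying `Ψ⁻¹` substitutes `x ↦ xˡ` and, after reindexing the
divisor sum by `d = n / l`, gives the formula. -/

open Finset

namespace PowerSeries

variable {R : Type*} [CommSemiring R]

lemma coeff_pow_congr {A B : PowerSeries R} {m : ℕ}
    (h : ∀ r ≤ m, coeff r A = coeff r B) (i : ℕ) : coeff m (A ^ i) = coeff m (B ^ i) := by
  induction i generalizing m with
  | zero => simp
  | succ i ih =>
    simp only [pow_succ, coeff_mul]
    refine sum_congr rfl fun x hx => ?_
    rw [HasAntidiagonal.mem_antidiagonal] at hx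
    rw [ih fun r hr => h r (by omega), h x.2 (by omega)]

lemma coeff_sum_C_mul_X_pow_pow (s : Finset ℕ) (a : ℕ → R) (i d : ℕ) :
    coeff d ((∑ j ∈ s, C (a j) * X ^ j) ^ i) =
      ∑ k ∈ (piAntidiag s i).filter (fun k => ∑ j ∈ s, j * k j = d),
        (Nat.multinomial s k : R) * ∏ j ∈ s, a j ^ k j := by
  rw [sum_pow_eq_sum_piAntidiag, map_sum, sum_filter]
  refine sum_congr rfl fun k _ => ?_
  simp_rw [mul_pow, ← map_pow, ← pow_mul, prod_mul_distrib, ← map_prod, prod_pow_eq_pow_sum,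
    ← map_natCast (C (R := R)), ← mul_assoc, ← map_mul, coeff_C_mul_X_pow, mul_comm _ (k _),
    eq_comm]

end PowerSeries

namespace Nat.Partition

variable {d : ℕ}

lemma mem_Icc_of_mem_parts (p : d.Partition) {a : ℕ} (ha : a ∈ p.parts) : a ∈ Icc 1 d :=
  mem_Icc.2 ⟨p.parts_pos ha, le_of_mem_parts ha⟩

lemma sum_count_parts (p : d.Partition) :
    ∑ j ∈ Icc 1 d, Multiset.count j p.parts = Multiset.card p.parts :=
  Multiset.sum_count_eq_card fun _ => p.mem_Icc_of_mem_parts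

lemma sum_mul_count_parts (p : d.Partition) :
    ∑ j ∈ Icc 1 d, j * Multiset.count j p.parts = d := by
  conv_rhs => rw [← p.parts_sum, sum_multiset_count_of_subset _ _ fun _ ha =>
    p.mem_Icc_of_mem_parts (Multiset.mem_toFinset.1 ha)]
  simp only [smul_eq_mul, mul_comm]

lemma card_parts_mem_Icc (hd : 1 ≤ d) (p : d.Partition) : Multiset.card p.parts ∈ Icc 1 d := by
  refine mem_Icc.2 ⟨Multiset.card_pos.2 fun h => ?_, ?_⟩
  · have := p.parts_sum
    simp [h] at this
    omega
  · calc Multiset.card p.parts = ∑ j ∈ Icc 1 d, Multiset.count j p.parts := p.sum_count_parts.symm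
      _ ≤ ∑ j ∈ Icc 1 d, j * Multiset.count j p.parts :=
          sum_le_sum fun j hj => Nat.le_mul_of_pos_left _ (mem_Icc.1 hj).1
      _ = d := p.sum_mul_count_parts

def ofMultiplicities (k : ℕ → ℕ) (hk : ∑ j ∈ Icc 1 d, j * k j = d) : d.Partition where
  parts := ∑ j ∈ Icc 1 d, Multiset.replicate (k j) j
  parts_pos ha := by
    obtain ⟨j, hj, hja⟩ := Multiset.mem_sum.1 ha
    rw [Multiset.eq_of_mem_replicate hja]
    exact (mem_Icc.1 hj).1
  parts_sum := by
    rw [← Multiset.coe_sumAddMonoidHom, map_sum]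
    simpa [Multiset.sum_replicate, mul_comm] using hk

lemma count_ofMultiplicities {k : ℕ → ℕ} (hk : ∑ j ∈ Icc 1 d, j * k j = d)
    (hsupp : ∀ j, k j ≠ 0 → j ∈ Icc 1 d) (a : ℕ) :
    Multiset.count a (ofMultiplicities k hk).parts = k a := by
  simp only [ofMultiplicities, Multiset.count_sum', Multiset.count_replicate, sum_ite_eq']
  split_ifs with ha
  · rfl
  · by_contra h
    exact ha (hsupp a (Ne.symm h))

lemma card_ofMultiplicities {k : ℕ → ℕ} (hk : ∑ j ∈ Icc 1 d, j * k j = d) :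
    Multiset.card (ofMultiplicities k hk).parts = ∑ j ∈ Icc 1 d, k j := by
  simp [ofMultiplicities, Multiset.card_sum]

lemma sum_sum_piAntidiag_eq_sum {M : Type*} [AddCommMonoid M] (hd : 1 ≤ d)
    (g : ℕ → (ℕ → ℕ) → M) :
    ∑ i ∈ Icc 1 d, ∑ k ∈ (piAntidiag (Icc 1 d) i).filter (fun k => ∑ j ∈ Icc 1 d, j * k j = d),
        g i k =
      ∑ p : d.Partition, g (Multiset.card p.parts) (fun j => Multiset.count j p.parts) := by
  rw [sum_sigma']
  symm
  refine sum_nbij (fun p => ⟨Multiset.card p.parts, fun j => Multiset.count j p.parts⟩)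
    (fun p _ => ?_) (fun p _ q _ hpq => ?_) (fun x hx => ?_) (fun _ _ => rfl)
  · refine mem_sigma.2 ⟨card_parts_mem_Icc hd p, mem_filter.2 ⟨?_, p.sum_mul_count_parts⟩⟩
    exact mem_piAntidiag.2 ⟨p.sum_count_parts,
      fun j hj => p.mem_Icc_of_mem_parts (Multiset.count_ne_zero.1 hj)⟩
  · exact Nat.Partition.ext <| Multiset.ext.2 fun a =>
      congr_fun (eq_of_heq (Sigma.mk.inj_iff.1 hpq).2) a
  · obtain ⟨i, k⟩ := x
    obtain ⟨-, hk, hweight⟩ := mem_sigma.1 hx |>.imp_right mem_filter.1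
    obtain ⟨hcard, hsupp⟩ := mem_piAntidiag.1 hk
    refine ⟨ofMultiplicities k hweight, mem_coe.2 (mem_univ _), ?_⟩
    ext
    · exact (card_ofMultiplicities hweight).trans hcard
    · exact heq_of_eq (funext (count_ofMultiplicities hweight hsupp))

end Nat.Partition

lemma coeff_plog_one_add (f : ℕ → Polynomial ℚ) {d : ℕ} (hd : 1 ≤ d) :
    PowerSeries.coeff d (plog (1 + PowerSeries.mk fun k => if k = 0 then 0 else f k)) =
      ∑ p : d.Partition,
        Polynomial.C (((-1 : ℚ) ^ (Multiset.card p.parts - 1) / (Multiset.card p.parts : ℚ)) *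
            (Nat.multinomial (Icc 1 d) (fun j => Multiset.count j p.parts) : ℚ)) *
          ∏ j ∈ Icc 1 d, f j ^ Multiset.count j p.parts := by
  have htrunc : ∀ r ≤ d,
      PowerSeries.coeff r (PowerSeries.mk fun k => if k = 0 then 0 else f k) =
        PowerSeries.coeff r (∑ j ∈ Icc 1 d, PowerSeries.C (f j) * PowerSeries.X ^ j) := by
    intro r hr
    simp only [PowerSeries.coeff_mk, map_sum, PowerSeries.coeff_C_mul_X_pow, sum_ite_eq, mem_Icc]
    split_ifs <;> first | rfl | omega
  simp only [plog, PowerSeries.coeff_mk, add_sub_cancel_left,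
    PowerSeries.coeff_pow_congr htrunc, PowerSeries.coeff_sum_C_mul_X_pow_pow, mul_sum]
  rw [Nat.Partition.sum_sum_piAntidiag_eq_sum hd]
  simp only [Polynomial.C_mul, Polynomial.C_eq_natCast, mul_assoc]

theorem stmt_13_general (f : ℕ → Polynomial ℚ) (F : PowerSeries (Polynomial ℚ))
    (hF : F = 1 + PowerSeries.mk fun k => if k = 0 then 0 else f k)
    (n : ℕ) :
    PowerSeries.coeff (R := Polynomial ℚ) n (adamsInv (plog F)) =
      ∑ d ∈ n.divisors, ∑ p : Nat.Partition d,
        Polynomial.C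
          ((ArithmeticFunction.moebius (n / d) : ℚ) / ((n / d : ℕ) : ℚ) *
            ((-1 : ℚ) ^ (Multiset.card p.parts - 1) / (Multiset.card p.parts : ℚ)) *
            (Nat.multinomial (Finset.Icc 1 d) (fun j => Multiset.count j p.parts) : ℚ)) *
          ∏ j ∈ Finset.Icc 1 d, ((f j).comp (Polynomial.X ^ (n / d))) ^
            (Multiset.count j p.parts) := by
  subst hF
  rw [adamsInv, PowerSeries.coeff_mk, ← Nat.sum_div_divisors]
  refine sum_congr rfl fun d hd => ?_
  rw [Nat.div_div_self (Nat.dvd_of_mem_divisors hd) (Nat.ne_zero_of_mem_divisors hd),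
    coeff_plog_one_add f (Nat.pos_of_mem_divisors hd)]
  simp only [Polynomial.sum_comp, mul_sum, Polynomial.mul_comp, Polynomial.C_comp,
    Polynomial.prod_comp, Polynomial.pow_comp, Polynomial.C_mul, mul_assoc]

/-- Given `f_n ∈ ℚ[x]`, the coefficient of `tⁿ` in
`PLog(1 + Σ_{n≥1} f_n tⁿ) = Ψ⁻¹(log(1 + Σ f_n tⁿ))` equals
`Σ_{d ∣ n} Σ_{[k] ∈ 𝒫_d} (μ(n/d)/(n/d)) ((−1)^{|[k]|−1}/|[k]|)
  multinomial(|[k]|; k₁,…,k_d) ∏_{j=1}^d f_j(x^{n/d})^{k_j}`. -/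
theorem stmt_13 (f : ℕ → Polynomial ℚ) (F : PowerSeries (Polynomial ℚ))
    (hF : F = 1 + PowerSeries.mk fun k => if k = 0 then 0 else f k)
    (n : ℕ) (hn : 1 ≤ n) :
    PowerSeries.coeff (R := Polynomial ℚ) n (adamsInv (plog F)) =
      ∑ d ∈ n.divisors, ∑ p : Nat.Partition d,
        Polynomial.C
          ((ArithmeticFunction.moebius (n / d) : ℚ) / ((n / d : ℕ) : ℚ) *
            ((-1 : ℚ) ^ (Multiset.card p.parts - 1) / (Multiset.card p.parts : ℚ)) *
            (Nat.multinomial (Finset.Icc 1 d) (fun j => Multiset.count j p.parts) : ℚ)) *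
          ∏ j ∈ Finset.Icc 1 d, ((f j).comp (Polynomial.X ^ (n / d))) ^
            (Multiset.count j p.parts) :=
  stmt_13_general f F hF n
end
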